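/- Let k be any field and let τ be the k-automorphism of k(Y_1, Y_2, Y_3) defined by τ(Y_1) = Y_1, τ(Y_2) = Y_1²/(Y_2(1 − Y_1 + Y_1²)), τ(Y_3) = −Y_3 (assume char k ≠ 2 so τ has order 2). Define Z_1 = Y_1, Z_2 = Y_2 + Y_1²/(Y_2(1 − Y_1 + Y_1²)), Z_3 = Y_3·(Y_2 − Y_1²/(Y_2(1 − Y_1 + Y_1²))). Then k(Y_1, Y_2, Y_3)^⟨τ⟩ = k(Z_1, Z_2, Z_3); in particular the fixed field is rational over k. -/

import Mathlib

/-!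
`τ` fixes `Y₁` and `τ (τ Y₂) = Y₂`, so `Y₂` is a root of `(T - Y₂)(T - τ Y₂)`, whose coefficients
`Z₂ = Y₂ + τ Y₂` and `Y₂ · τ Y₂ = Y₁² / (1 - Y₁ + Y₁²)` lie in `F = k(Z₁, Z₂, Z₃)`, a subfield of the
fixed field. As `Y₃ = Z₃ / (Y₂ - τ Y₂)`, the whole field is `F(Y₂)`, so each element is `a + b Y₂`
with `a, b ∈ F`, and it is `τ`-fixed iff `b (τ Y₂ - Y₂) = 0`, i.e. `b = 0`.
-/

open IntermediateField Polynomial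

theorem mem_fixedField_zpowers_iff {k E : Type*} [Field k] [Field E] [Algebra k E]
    (σ : E ≃ₐ[k] E) (x : E) : x ∈ fixedField (Subgroup.zpowers σ) ↔ σ x = x := by
  rw [mem_fixedField_iff]
  refine ⟨fun h => h σ (Subgroup.mem_zpowers σ), fun h f hf => ?_⟩
  exact (Subgroup.zpowers_le (H := MulAction.stabilizer _ x)).mpr h hf

theorem IntermediateField.exists_eq_add_mul_of_mem_adjoin_simple {F E : Type*} [Field F]
    [Field E] [Algebra F E] {y : E} {s c : F}
    (hy : y ^ 2 - algebraMap F E s * y + algebraMap F E c = 0) {x : E} (hx : x ∈ F⟮y⟯) :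
    ∃ a b : F, x = algebraMap F E a + algebraMap F E b * y := by
  set q : F[X] := X ^ 2 - C s * X + C c with hq_def
  have hq : q.Monic := by rw [hq_def]; monicity!
  have hqy : aeval y q = 0 := by simpa [q] using hy
  rw [← mem_toSubalgebra, adjoin_simple_toSubalgebra_of_isAlgebraic
    (IsIntegral.isAlgebraic ⟨q, hq, hqy⟩), Algebra.adjoin_singleton_eq_range_aeval] at hx
  obtain ⟨p, rfl⟩ := hx
  have hr : (p %ₘ q).degree ≤ 1 := by
    have := degree_modByMonic_lt p hq
    rw [show q.degree = 2 by rw [hq_def]; compute_degree!] at this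
    exact Order.lt_succ_iff.mp this
  refine ⟨(p %ₘ q).coeff 0, (p %ₘ q).coeff 1, ?_⟩
  conv_lhs => rw [← modByMonic_add_div p q, eq_X_add_C_of_degree_le_one hr]
  simp [hqy, add_comm]

theorem fixedField_zpowers_eq_of_adjoin_eq_top {k E : Type*} [Field k] [Field E] [Algebra k E]
    (σ : E ≃ₐ[k] E) (F : IntermediateField k E) (hF : F ≤ fixedField (Subgroup.zpowers σ))
    {y : E} (hsum : y + σ y ∈ F) (hprod : y * σ y ∈ F) (hσy : σ y ≠ y) (htop : F⟮y⟯ = ⊤) :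
    fixedField (Subgroup.zpowers σ) = F := by
  refine le_antisymm (fun x hx => ?_) hF
  have hy : y ^ 2 - algebraMap F E ⟨_, hsum⟩ * y + algebraMap F E ⟨_, hprod⟩ = 0 := by
    simp only [IntermediateField.algebraMap_apply]; ring
  obtain ⟨a, b, rfl⟩ := exists_eq_add_mul_of_mem_adjoin_simple hy (x := x) (htop ▸ mem_top)
  have hfix : ∀ z : F, σ z = z := fun z => (mem_fixedField_zpowers_iff σ z).mp (hF z.2)
  rw [mem_fixedField_zpowers_iff, map_add, map_mul] at hx
  simp only [IntermediateField.algebraMap_apply, hfix] at hx ⊢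
  have hb : (b : E) * (σ y - y) = 0 := by linear_combination hx
  rw [(mul_eq_zero.mp hb).resolve_right (sub_ne_zero.mpr hσy), zero_mul, add_zero]
  exact a.2

theorem MvPolynomial.algebraMap_ne_zero_of_eval_ne_zero {σ k K : Type*} [CommRing k]
    [CommRing K] [Algebra (MvPolynomial σ k) K] [IsFractionRing (MvPolynomial σ k) K]
    {p : MvPolynomial σ k} (v : σ → k) (hp : eval v p ≠ 0) :
    algebraMap (MvPolynomial σ k) K p ≠ 0 := by
  rw [Ne, IsFractionRing.to_map_eq_zero_iff]
  rintro rfl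
  exact hp (map_zero _)

theorem MvPolynomial.intermediateField_eq_top_of_forall_X_mem {σ k K : Type*} [Field k]
    [Field K] [Algebra (MvPolynomial σ k) K] [IsFractionRing (MvPolynomial σ k) K] [Algebra k K]
    [IsScalarTower k (MvPolynomial σ k) K] (L : IntermediateField k K)
    (hX : ∀ i, algebraMap (MvPolynomial σ k) K (X i) ∈ L) : L = ⊤ := by
  have hrange : ∀ p, algebraMap (MvPolynomial σ k) K p ∈ L := by
    have : (IsScalarTower.toAlgHom k (MvPolynomial σ k) K).range ≤ L.toSubalgebra := by
      rw [← Algebra.map_top, ← adjoin_range_X, AlgHom.map_adjoin, ← Set.range_comp]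
      exact Algebra.adjoin_le (Set.range_subset_iff.mpr hX)
    exact fun p => this ⟨p, rfl⟩
  refine eq_top_iff.mpr fun x _ => ?_
  obtain ⟨p, q, -, rfl⟩ := IsFractionRing.div_surjective (MvPolynomial σ k) x
  exact div_mem (hrange p) (hrange q)

theorem fixedField_zpowers_eq_adjoin_of_quadratic_of_sign {k E : Type*} [Field k] [Field E]
    [Algebra k E] (σ : E ≃ₐ[k] E) {y₁ y₂ y₃ : E} (hσ₁ : σ y₁ = y₁) (hσσ₂ : σ (σ y₂) = y₂)
    (hσ₃ : σ y₃ = -y₃) (hσ₂ : σ y₂ ≠ y₂) (hprod : y₂ * σ y₂ ∈ k⟮y₁⟯)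
    (htop : adjoin k {y₁, y₂, y₃} = ⊤) :
    fixedField (Subgroup.zpowers σ) = adjoin k {y₁, y₂ + σ y₂, y₃ * (y₂ - σ y₂)} := by
  set F := adjoin k {y₁, y₂ + σ y₂, y₃ * (y₂ - σ y₂)}
  have hy₁ : y₁ ∈ F := subset_adjoin k _ (by simp)
  have hsum : y₂ + σ y₂ ∈ F := subset_adjoin k _ (by simp)
  have hz₃ : y₃ * (y₂ - σ y₂) ∈ F := subset_adjoin k _ (by simp)
  have hF : F ≤ fixedField (Subgroup.zpowers σ) := by
    simp only [F, adjoin_le_iff, Set.insert_subset_iff, Set.singleton_subset_iff,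
      SetLike.mem_coe, mem_fixedField_zpowers_iff, map_add, map_mul, map_sub, hσ₁, hσ₃, hσσ₂,
      true_and]
    exact ⟨add_comm _ _, by ring⟩
  refine fixedField_zpowers_eq_of_adjoin_eq_top σ F hF hsum (adjoin_simple_le_iff.mpr hy₁ hprod)
    hσ₂ (restrictScalars_injective k ?_)
  have hF_le : ∀ x ∈ F, x ∈ F⟮y₂⟯ := fun x hx =>
    IntermediateField.algebraMap_mem F⟮y₂⟯ (⟨x, hx⟩ : F)
  have hy₂ : y₂ ∈ F⟮y₂⟯ := mem_adjoin_simple_self F y₂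
  have hσy₂ : σ y₂ ∈ F⟮y₂⟯ := by simpa using sub_mem (hF_le _ hsum) hy₂
  have hy₃ : y₃ = y₃ * (y₂ - σ y₂) / (y₂ - σ y₂) :=
    (mul_div_cancel_right₀ _ (sub_ne_zero.mpr hσ₂.symm)).symm
  rw [restrictScalars_top, eq_top_iff, ← htop, adjoin_le_iff]
  simp only [Set.insert_subset_iff, Set.singleton_subset_iff, SetLike.mem_coe,
    mem_restrictScalars]
  refine ⟨hF_le _ hy₁, hy₂, hy₃ ▸ div_mem (hF_le _ hz₃) (sub_mem hy₂ hσy₂)⟩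

theorem stmt_15_general (k : Type*) [Field k]
    (Y₁ Y₂ Y₃ : FractionRing (MvPolynomial (Fin 3) k))
    (hY₁ : Y₁ = algebraMap (MvPolynomial (Fin 3) k) _ (MvPolynomial.X 0))
    (hY₂ : Y₂ = algebraMap (MvPolynomial (Fin 3) k) _ (MvPolynomial.X 1))
    (hY₃ : Y₃ = algebraMap (MvPolynomial (Fin 3) k) _ (MvPolynomial.X 2))
    (τ : FractionRing (MvPolynomial (Fin 3) k) ≃ₐ[k] FractionRing (MvPolynomial (Fin 3) k))
    (hτ₁ : τ Y₁ = Y₁)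
    (hτ₂ : τ Y₂ = Y₁ ^ 2 / (Y₂ * (1 - Y₁ + Y₁ ^ 2)))
    (hτ₃ : τ Y₃ = -Y₃)
    (Z₁ Z₂ Z₃ : FractionRing (MvPolynomial (Fin 3) k))
    (hZ₁ : Z₁ = Y₁)
    (hZ₂ : Z₂ = Y₂ + Y₁ ^ 2 / (Y₂ * (1 - Y₁ + Y₁ ^ 2)))
    (hZ₃ : Z₃ = Y₃ * (Y₂ - Y₁ ^ 2 / (Y₂ * (1 - Y₁ + Y₁ ^ 2)))) :
    IntermediateField.fixedField (Subgroup.zpowers τ) =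
      IntermediateField.adjoin k {Z₁, Z₂, Z₃} := by
  have hY₁0 : Y₁ ≠ 0 := by
    rw [hY₁]; exact MvPolynomial.algebraMap_ne_zero_of_eval_ne_zero (1 : Fin 3 → k) (by simp)
  have hY₂0 : Y₂ ≠ 0 := by
    rw [hY₂]; exact MvPolynomial.algebraMap_ne_zero_of_eval_ne_zero (1 : Fin 3 → k) (by simp)
  have hD : 1 - Y₁ + Y₁ ^ 2 ≠ 0 := by
    have := MvPolynomial.algebraMap_ne_zero_of_eval_ne_zero
      (K := FractionRing (MvPolynomial (Fin 3) k)) (fun _ => (0 : k))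
      (p := (1 - MvPolynomial.X 0 + MvPolynomial.X 0 ^ 2 : MvPolynomial (Fin 3) k)) (by simp)
    simpa [← hY₁] using this
  have hτY₂ : τ Y₂ ≠ Y₂ := by
    have := MvPolynomial.algebraMap_ne_zero_of_eval_ne_zero
      (K := FractionRing (MvPolynomial (Fin 3) k)) ![0, 1, 0]
      (p := (MvPolynomial.X 1 ^ 2 * (1 - MvPolynomial.X 0 + MvPolynomial.X 0 ^ 2) -
        MvPolynomial.X 0 ^ 2 : MvPolynomial (Fin 3) k)) (by simp)
    rw [hτ₂, Ne, div_eq_iff (mul_ne_zero hY₂0 hD)]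
    simp only [map_sub, map_mul, map_add, map_pow, map_one, ← hY₁, ← hY₂] at this
    exact fun h => this (by linear_combination -h)
  have htop : adjoin k {Y₁, Y₂, Y₃} = ⊤ := by
    refine MvPolynomial.intermediateField_eq_top_of_forall_X_mem (σ := Fin 3) _ fun i => ?_
    fin_cases i <;> exact subset_adjoin k _ (by simp [hY₁, hY₂, hY₃])
  rw [hZ₁, hZ₂, hZ₃, ← hτ₂]
  refine fixedField_zpowers_eq_adjoin_of_quadratic_of_sign τ hτ₁ ?_ hτ₃ hτY₂ ?_ htop
  · rw [hτ₂, map_div₀, map_mul, map_pow, map_add, map_sub, map_one, map_pow, hτ₁, hτ₂]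
    field_simp
  · have hy₁ := mem_adjoin_simple_self k Y₁
    rw [hτ₂, mul_div_assoc', mul_div_mul_left _ _ hY₂0]
    exact div_mem (pow_mem hy₁ 2) (add_mem (sub_mem (one_mem _) hy₁) (pow_mem hy₁ 2))

/-- Let `k` be a field with `char k ≠ 2` and let `τ` be the `k`-automorphism of
`k(Y₁,Y₂,Y₃)` defined by `τ(Y₁) = Y₁`, `τ(Y₂) = Y₁²/(Y₂(1 − Y₁ + Y₁²))`, `τ(Y₃) = −Y₃`.
With `Z₁ = Y₁`, `Z₂ = Y₂ + Y₁²/(Y₂(1 − Y₁ + Y₁²))` and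
`Z₃ = Y₃·(Y₂ − Y₁²/(Y₂(1 − Y₁ + Y₁²)))`, one has `k(Y₁,Y₂,Y₃)^⟨τ⟩ = k(Z₁,Z₂,Z₃)`;
in particular the fixed field is rational over `k`. -/
theorem stmt_15 (k : Type*) [Field k] (hchar : (2 : k) ≠ 0)
    (Y₁ Y₂ Y₃ : FractionRing (MvPolynomial (Fin 3) k))
    (hY₁ : Y₁ = algebraMap (MvPolynomial (Fin 3) k) _ (MvPolynomial.X 0))
    (hY₂ : Y₂ = algebraMap (MvPolynomial (Fin 3) k) _ (MvPolynomial.X 1))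
    (hY₃ : Y₃ = algebraMap (MvPolynomial (Fin 3) k) _ (MvPolynomial.X 2))
    (τ : FractionRing (MvPolynomial (Fin 3) k) ≃ₐ[k] FractionRing (MvPolynomial (Fin 3) k))
    (hτ₁ : τ Y₁ = Y₁)
    (hτ₂ : τ Y₂ = Y₁ ^ 2 / (Y₂ * (1 - Y₁ + Y₁ ^ 2)))
    (hτ₃ : τ Y₃ = -Y₃)
    (Z₁ Z₂ Z₃ : FractionRing (MvPolynomial (Fin 3) k))
    (hZ₁ : Z₁ = Y₁)
    (hZ₂ : Z₂ = Y₂ + Y₁ ^ 2 / (Y₂ * (1 - Y₁ + Y₁ ^ 2)))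
    (hZ₃ : Z₃ = Y₃ * (Y₂ - Y₁ ^ 2 / (Y₂ * (1 - Y₁ + Y₁ ^ 2)))) :
    IntermediateField.fixedField (Subgroup.zpowers τ) =
      IntermediateField.adjoin k {Z₁, Z₂, Z₃} :=
  stmt_15_general k Y₁ Y₂ Y₃ hY₁ hY₂ hY₃ τ hτ₁ hτ₂ hτ₃ Z₁ Z₂ Z₃ hZ₁ hZ₂ hZ₃
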